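/- arXiv:2402.16332 — 2 statements merged into one kernel-verified Lean document; each statement's English description precedes it below -/
import Mathlib

section
/- There exist constants ε₀ > 0 and C > 0 such that for all real b and all positive integers r with |b| ≤ ε₀ r^{1/3}, setting λ = 1/2 − b r^{−1/3}, one has (λ²/((1/2)(2λ − 1/2)))^{⌊a r^{2/3}⌋} ≤ e^{C a b²} for every fixed a > 0 (with the constant C independent of a, b, r). -/
open Real

/-- There exist ε₀ > 0 and C > 0 such that for all real b and positive integers r with
|b| ≤ ε₀ r^{1/3}, setting λ = 1/2 − b r^{−1/3}, for every a > 0 one has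
(λ²/((1/2)(2λ − 1/2)))^{⌊a r^{2/3}⌋} ≤ e^{C a b²}. -/
theorem RN_second_moment_power_bound :
    ∃ ε₀ > (0:ℝ), ∃ C > (0:ℝ), ∀ (b : ℝ) (r : ℕ), 0 < r →
      |b| ≤ ε₀ * (r:ℝ)^((1:ℝ)/3) →
      ∀ a : ℝ, 0 < a →
        (((1/2 - b * (r:ℝ)^(-(1:ℝ)/3))^2 /
            ((1/2) * (2 * (1/2 - b * (r:ℝ)^(-(1:ℝ)/3)) - 1/2)))
          ^ (⌊a * (r:ℝ)^((2:ℝ)/3)⌋₊ : ℕ))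
          ≤ Real.exp (C * a * b^2) := by
  refine ⟨1/8, by norm_num, 8, by norm_num, ?_⟩
  intro b r hr hb a ha
  set t : ℝ := (r:ℝ)^((1:ℝ)/3) with ht
  have hrpos : (0:ℝ) < (r:ℝ) := by exact_mod_cast hr
  have htpos : (0:ℝ) < t := Real.rpow_pos_of_pos hrpos _
  have hneg : (r:ℝ)^(-(1:ℝ)/3) = t⁻¹ := by
    rw [neg_div, Real.rpow_neg hrpos.le]
  set x : ℝ := b * t⁻¹ with hx
  have hxabs : |x| ≤ 1/8 := by
    have : |x| = |b| * t⁻¹ := by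
      rw [hx, abs_mul, abs_inv, abs_of_pos htpos]
    rw [this]
    calc |b| * t⁻¹ ≤ (1/8 * t) * t⁻¹ := by
          apply mul_le_mul_of_nonneg_right hb (inv_nonneg.mpr htpos.le)
      _ = 1/8 := by field_simp
  have hx1 : x ≤ 1/8 := (abs_le.mp hxabs).2
  have hx2 : -(1/8) ≤ x := (abs_le.mp hxabs).1
  rw [hneg]
  show ((1/2 - x)^2 / ((1/2) * (2 * (1/2 - x) - 1/2)))^(⌊a * (r:ℝ)^((2:ℝ)/3)⌋₊) ≤ _
  have hden : (0:ℝ) < (1/2) * (2 * (1/2 - x) - 1/2) := by nlinarith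
  have hratio : (1/2 - x)^2 / ((1/2) * (2 * (1/2 - x) - 1/2)) ≤ 1 + 8 * x^2 := by
    rw [div_le_iff₀ hden]
    nlinarith [sq_nonneg x]
  have hratio_nonneg : (0:ℝ) ≤ (1/2 - x)^2 / ((1/2) * (2 * (1/2 - x) - 1/2)) :=
    div_nonneg (sq_nonneg _) hden.le
  set n : ℕ := ⌊a * (r:ℝ)^((2:ℝ)/3)⌋₊ with hn
  calc ((1/2 - x)^2 / ((1/2) * (2 * (1/2 - x) - 1/2)))^n
      ≤ (Real.exp (8 * x^2))^n := by
        apply pow_le_pow_left₀ hratio_nonneg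
        exact hratio.trans (by linarith [Real.add_one_le_exp (8 * x^2)])
    _ = Real.exp ((n:ℝ) * (8 * x^2)) := (Real.exp_nat_mul _ n).symm
    _ ≤ Real.exp (8 * a * b^2) := by
        apply Real.exp_le_exp.mpr
        have hnle : (n:ℝ) ≤ a * (r:ℝ)^((2:ℝ)/3) :=
          Nat.floor_le (by positivity)
        have ht2 : (r:ℝ)^((2:ℝ)/3) = t^2 := by
          rw [ht, ← Real.rpow_natCast ((r:ℝ)^((1:ℝ)/3)) 2, ← Real.rpow_mul hrpos.le]
          norm_num
        have hxx : x^2 = b^2 * (t^2)⁻¹ := by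
          rw [hx]; field_simp
        have : (n:ℝ) * (8 * x^2) ≤ (a * t^2) * (8 * (b^2 * (t^2)⁻¹)) := by
          rw [← hxx]
          apply mul_le_mul (ht2 ▸ hnle) le_rfl (by positivity) (by positivity)
        calc (n:ℝ) * (8 * x^2) ≤ (a * t^2) * (8 * (b^2 * (t^2)⁻¹)) := this
          _ = 8 * a * b^2 := by field_simp
end

section
/- Let Q be the law of N = ⌊a₁r^{2/3}⌋ + ⌊a₂n^{2/3}⌋ independent Exp(1/2) random variables, and let Q̃ be the law where the first ⌊a₁r^{2/3}⌋ coordinates are Exp(1/2 − br^{−1/3}) and the remaining ⌊a₂n^{2/3}⌋ coordinates are Exp(1/2 + bn^{−1/3}), all independent. If |b| < ε₀ r^{1/3} for a sufficiently small absolute ε₀ and r ≤ n, then E_Q[(dQ̃/dQ)²] ≤ e^{C(a₁+a₂)b²} for an absolute constant C. -/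
/-!
Under `Q` the likelihood ratio `dQ̃/dQ` is a product over the coordinates, so its second moment
is the product of the one-dimensional ones. For rates `r, s` with `δ = r - s`,
`∫ (dExp(s)/dExp(r))² dExp(r) = s² / (r (2s - r)) = 1 + δ² / (r (r - 2δ))`, which is at most
`exp (2 δ² / r²)` once `|δ| ≤ r/4`. With `r = 1/2` the deviations are `b r^{-1/3}` on
`⌊a₁ r^{2/3}⌋` coordinates and `b n^{-1/3}` on `⌊a₂ n^{2/3}⌋` coordinates; both are below `1/8`
when `|b| < r^{1/3}/8` and `r ≤ n`, and the exponent adds up to at most `8 (a₁ + a₂) b²`.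
-/

open Real MeasureTheory ProbabilityTheory
open scoped ENNReal

namespace MeasureTheory

variable {ι : Type*} [Fintype ι] {α : ι → Type*} [∀ i, MeasurableSpace (α i)]
  {μ : ∀ i, Measure (α i)} [∀ i, IsProbabilityMeasure (μ i)]

theorem lintegral_pi_prod_eq_prod {f : ∀ i, α i → ℝ≥0∞} (hf : ∀ i, Measurable (f i)) :
    ∫⁻ x, ∏ i, f i (x i) ∂Measure.pi μ = ∏ i, ∫⁻ x, f i x ∂μ i := by
  rw [lintegral_prod_eq_prod_lintegral_of_indepFun _ _
    (iIndepFun_pi fun i => (hf i).aemeasurable) fun i => (hf i).comp (measurable_pi_apply i)]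
  exact Finset.prod_congr rfl fun i _ => (measurePreserving_eval μ i).lintegral_comp (hf i)

theorem Measure.pi_eq_withDensity_prod {ν : ∀ i, Measure (α i)} [∀ i, SigmaFinite (ν i)]
    {g : ∀ i, α i → ℝ≥0∞} (hg : ∀ i, Measurable (g i))
    (hν : ∀ i, ν i = (μ i).withDensity (g i)) :
    Measure.pi ν = (Measure.pi μ).withDensity fun x => ∏ i, g i (x i) := by
  refine Measure.pi_eq (μ := ν) fun s hs => ?_
  have hbox : (Set.univ.pi s).indicator (fun x => ∏ i, g i (x i))
      = fun x => ∏ i, (s i).indicator (g i) (x i) := by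
    ext x
    classical
    simp only [Set.indicator_apply, Set.mem_univ_pi, Fintype.prod_ite_zero]
  rw [withDensity_apply _ (.univ_pi hs), ← lintegral_indicator (.univ_pi hs), hbox,
    lintegral_pi_prod_eq_prod fun i => (hg i).indicator (hs i)]
  exact Finset.prod_congr rfl fun i _ => by
    rw [hν i, withDensity_apply _ (hs i), lintegral_indicator (hs i)]

theorem integral_rnDeriv_pi_sq_eq_prod {ν : ∀ i, Measure (α i)} [∀ i, SigmaFinite (ν i)]
    {f : ∀ i, α i → ℝ} (hf : ∀ i, Measurable (f i)) (hf₀ : ∀ i x, 0 ≤ f i x)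
    (hν : ∀ i, ν i = (μ i).withDensity fun x => ENNReal.ofReal (f i x)) :
    ∫ x, ((Measure.pi ν).rnDeriv (Measure.pi μ) x).toReal ^ 2 ∂Measure.pi μ
      = ∏ i, ∫ x, f i x ^ 2 ∂μ i := by
  have hG : Measurable fun x : ∀ i, α i => ∏ i, ENNReal.ofReal (f i (x i)) :=
    Finset.measurable_prod _ fun i _ => ((hf i).comp (measurable_pi_apply i)).ennreal_ofReal
  rw [Measure.pi_eq_withDensity_prod (fun i => (hf i).ennreal_ofReal) hν,
    ← integral_fintype_prod_eq_prod]
  refine integral_congr_ae ?_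
  filter_upwards [Measure.rnDeriv_withDensity _ hG] with x hx
  simp only [hx, ENNReal.toReal_prod, ENNReal.toReal_ofReal (hf₀ _ _), Finset.prod_pow]

end MeasureTheory

namespace ProbabilityTheory

noncomputable def expLikelihoodRatio (r s x : ℝ) : ℝ := s / r * exp ((r - s) * x)

variable {r s : ℝ}

lemma expLikelihoodRatio_nonneg (hr : 0 < r) (hs : 0 ≤ s) (x : ℝ) :
    0 ≤ expLikelihoodRatio r s x := by
  unfold expLikelihoodRatio; positivity

lemma measurable_expLikelihoodRatio (r s : ℝ) : Measurable (expLikelihoodRatio r s) := by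
  unfold expLikelihoodRatio; fun_prop

lemma exponentialPDF_mul_expLikelihoodRatio (hr : 0 < r) (s x : ℝ) :
    exponentialPDF r x * ENNReal.ofReal (expLikelihoodRatio r s x) = exponentialPDF s x := by
  rcases le_or_gt 0 x with hx | hx
  · rw [exponentialPDF_of_nonneg hx, exponentialPDF_of_nonneg hx,
      ← ENNReal.ofReal_mul (by positivity), expLikelihoodRatio]
    congr 1
    rw [show -(s * x) = -(r * x) + (r - s) * x by ring, exp_add]
    field_simp
  · rw [exponentialPDF_of_neg hx, exponentialPDF_of_neg hx, zero_mul]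

lemma expMeasure_eq_withDensity_expLikelihoodRatio (hr : 0 < r) (s : ℝ) :
    expMeasure s
      = (expMeasure r).withDensity fun x => ENNReal.ofReal (expLikelihoodRatio r s x) := by
  change volume.withDensity (exponentialPDF s)
    = (volume.withDensity (exponentialPDF r)).withDensity _
  rw [← withDensity_mul _ (f := exponentialPDF r) (measurable_exponentialPDFReal r).ennreal_ofReal
    (measurable_expLikelihoodRatio r s).ennreal_ofReal]
  exact congrArg _ (funext fun x => (exponentialPDF_mul_expLikelihoodRatio hr s x).symm)

lemma integral_expLikelihoodRatio (hr : 0 < r) (hs : 0 < s) :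
    ∫ x, expLikelihoodRatio r s x ∂expMeasure r = 1 := by
  have := isProbabilityMeasure_expMeasure hs
  rw [integral_eq_lintegral_of_nonneg_ae
      (.of_forall (expLikelihoodRatio_nonneg hr hs.le))
      (measurable_expLikelihoodRatio r s).aestronglyMeasurable,
    ← setLIntegral_univ, ← withDensity_apply _ .univ,
    ← expMeasure_eq_withDensity_expLikelihoodRatio hr, measure_univ, ENNReal.toReal_one]

lemma expLikelihoodRatio_sq (hs : 2 * s - r ≠ 0) (x : ℝ) :
    expLikelihoodRatio r s x ^ 2
      = s ^ 2 / (r * (2 * s - r)) * expLikelihoodRatio r (2 * s - r) x := by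
  unfold expLikelihoodRatio
  rw [show (r - (2 * s - r)) * x = (r - s) * x + (r - s) * x by ring, exp_add, ← mul_assoc,
    div_mul_div_comm, mul_right_comm r, mul_div_mul_right _ _ hs]
  ring

lemma integral_expLikelihoodRatio_sq (hr : 0 < r) (hrs : r < 2 * s) :
    ∫ x, expLikelihoodRatio r s x ^ 2 ∂expMeasure r = s ^ 2 / (r * (2 * s - r)) := by
  simp_rw [expLikelihoodRatio_sq (sub_pos.mpr hrs).ne']
  rw [integral_const_mul, integral_expLikelihoodRatio hr (sub_pos.mpr hrs), mul_one]

lemma sq_div_mul_two_mul_sub_le_exp (hr : 0 < r) (hrs : 4 * |r - s| ≤ r) :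
    s ^ 2 / (r * (2 * s - r)) ≤ exp (2 * ((r - s) / r) ^ 2) := by
  set t := (r - s) / r with ht
  have ht_le : |t| ≤ 1 / 4 := by
    rw [ht, abs_div, abs_of_pos hr, div_le_iff₀ hr]; linarith
  obtain ⟨ht₁, ht₂⟩ := abs_le.mp ht_le
  have hs : s = r * (1 - t) := by rw [ht]; field_simp; ring
  have hquot : s ^ 2 / (r * (2 * s - r)) = (1 - t) ^ 2 / (1 - 2 * t) := by
    rw [hs, div_eq_div_iff (mul_pos hr (by nlinarith)).ne' (by linarith)]; ring
  calc s ^ 2 / (r * (2 * s - r)) = (1 - t) ^ 2 / (1 - 2 * t) := hquot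
    _ ≤ 1 + 2 * t ^ 2 := by
      rw [div_le_iff₀ (by linarith)]; nlinarith [sq_nonneg t]
    _ ≤ exp (2 * t ^ 2) := by linarith [add_one_le_exp (2 * t ^ 2)]

lemma integral_rnDeriv_pi_expMeasure_sq_le {ι : Type*} [Fintype ι] {s : ι → ℝ} (hr : 0 < r)
    (hs : ∀ i, 4 * |r - s i| ≤ r) :
    ∫ x, ((Measure.pi fun i => expMeasure (s i)).rnDeriv
        (Measure.pi fun _ => expMeasure r) x).toReal ^ 2 ∂(Measure.pi fun _ => expMeasure r)
      ≤ exp (2 * ∑ i, ((r - s i) / r) ^ 2) := by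
  have hrs : ∀ i, r < 2 * s i := fun i => by linarith [hs i, le_abs_self (r - s i)]
  have := isProbabilityMeasure_expMeasure hr
  have : ∀ i, IsProbabilityMeasure (expMeasure (s i)) := fun i =>
    isProbabilityMeasure_expMeasure (by linarith [hrs i])
  rw [integral_rnDeriv_pi_sq_eq_prod (fun i => measurable_expLikelihoodRatio r (s i))
      (fun i => expLikelihoodRatio_nonneg hr (by linarith [hrs i]))
      (fun i => expMeasure_eq_withDensity_expLikelihoodRatio hr (s i)),
    Finset.mul_sum, exp_sum]
  refine Finset.prod_le_prod (fun i _ => ?_) fun i _ => ?_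
  · exact integral_nonneg fun x => sq_nonneg _
  · rw [integral_expLikelihoodRatio_sq hr (hrs i)]
    exact sq_div_mul_two_mul_sub_le_exp hr (hs i)

end ProbabilityTheory

theorem Fin.sum_ite_lt_add {M : Type*} [AddCommMonoid M] (m k : ℕ) (A B : M) :
    ∑ i : Fin (m + k), (if (i : ℕ) < m then A else B) = m • A + k • B := by
  simp [Fin.sum_univ_add]

lemma abs_mul_rpow_neg_one_third_lt {x y b ε : ℝ} (hx : 0 < x) (hxy : x ≤ y)
    (hb : |b| < ε * x ^ ((1:ℝ)/3)) : |b * y ^ (-(1:ℝ)/3)| < ε := by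
  have hy : 0 < y := hx.trans_le hxy
  rw [abs_mul, abs_of_pos (rpow_pos_of_pos hy _)]
  calc |b| * y ^ (-(1:ℝ)/3) ≤ |b| * x ^ (-(1:ℝ)/3) :=
        mul_le_mul_of_nonneg_left (rpow_le_rpow_of_nonpos hx hxy (by norm_num)) (abs_nonneg b)
    _ < ε * x ^ ((1:ℝ)/3) * x ^ (-(1:ℝ)/3) := by gcongr
    _ = ε := by rw [mul_assoc, ← rpow_add hx]; norm_num

lemma floor_mul_rpow_two_thirds_mul_sq_le {x a : ℝ} (hx : 0 < x) (ha : 0 ≤ a) (b : ℝ) :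
    (⌊a * x ^ ((2:ℝ)/3)⌋₊ : ℝ) * (b * x ^ (-(1:ℝ)/3)) ^ 2 ≤ a * b ^ 2 := by
  have hx2 : x ^ ((2:ℝ)/3) * (x ^ (-(1:ℝ)/3)) ^ 2 = 1 := by
    rw [← rpow_natCast, ← rpow_mul hx.le, ← rpow_add hx]; norm_num
  calc (⌊a * x ^ ((2:ℝ)/3)⌋₊ : ℝ) * (b * x ^ (-(1:ℝ)/3)) ^ 2
      ≤ a * x ^ ((2:ℝ)/3) * (b * x ^ (-(1:ℝ)/3)) ^ 2 := by
        gcongr; exact Nat.floor_le (by positivity)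
    _ = a * b ^ 2 * (x ^ ((2:ℝ)/3) * (x ^ (-(1:ℝ)/3)) ^ 2) := by ring
    _ = a * b ^ 2 := by rw [hx2, mul_one]

/-- Change-of-measure second moment bound for perturbed exponential product measures.
Q is the law of N = ⌊a₁r^{2/3}⌋ + ⌊a₂n^{2/3}⌋ i.i.d. Exp(1/2) variables; Q̃ makes the
first ⌊a₁r^{2/3}⌋ coordinates Exp(1/2 − br^{−1/3}) and the rest Exp(1/2 + bn^{−1/3}).
If |b| < ε₀ r^{1/3} (ε₀ a small absolute constant) and r ≤ n, then
E_Q[(dQ̃/dQ)²] ≤ e^{C(a₁+a₂)b²} for an absolute constant C. -/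
theorem RN_second_moment_product_bound :
    ∃ ε₀ > (0:ℝ), ∃ C > (0:ℝ),
      ∀ (a₁ a₂ b : ℝ) (r n : ℕ), 0 < a₁ → 0 < a₂ → 0 < r → r ≤ n →
        |b| < ε₀ * (r:ℝ)^((1:ℝ)/3) →
        ∀ (m N : ℕ), m = ⌊a₁ * (r:ℝ)^((2:ℝ)/3)⌋₊ →
          N = ⌊a₁ * (r:ℝ)^((2:ℝ)/3)⌋₊ + ⌊a₂ * (n:ℝ)^((2:ℝ)/3)⌋₊ →
        ∀ (Q Qt : Measure (Fin N → ℝ)),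
          Q = Measure.pi (fun _ : Fin N => expMeasure (1/2)) →
          Qt = Measure.pi (fun i : Fin N =>
            if (i : ℕ) < m then expMeasure (1/2 - b * (r:ℝ)^(-(1:ℝ)/3))
            else expMeasure (1/2 + b * (n:ℝ)^(-(1:ℝ)/3))) →
          ∫ x, ((Qt.rnDeriv Q x).toReal)^2 ∂Q ≤ Real.exp (C * (a₁ + a₂) * b^2) := by
  refine ⟨1/8, by norm_num, 8, by norm_num, ?_⟩
  intro a₁ a₂ b r n ha₁ ha₂ hr hrn hb m N hm hN Q Qt hQ hQt
  set k := ⌊a₂ * (n:ℝ)^((2:ℝ)/3)⌋₊ with hk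
  obtain rfl : N = m + k := hm ▸ hN
  subst hQ hQt
  have hr' : (0:ℝ) < r := Nat.cast_pos.mpr hr
  have hrn' : (r:ℝ) ≤ n := Nat.cast_le.mpr hrn
  set δ₁ := b * (r:ℝ)^(-(1:ℝ)/3)
  set δ₂ := b * (n:ℝ)^(-(1:ℝ)/3)
  have hδ₁ : |δ₁| < 1/8 := abs_mul_rpow_neg_one_third_lt hr' le_rfl hb
  have hδ₂ : |δ₂| < 1/8 := abs_mul_rpow_neg_one_third_lt hr' hrn' hb
  set s : Fin (m + k) → ℝ := fun i => if (i : ℕ) < m then 1/2 - δ₁ else 1/2 + δ₂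
  have hs : ∀ i, 4 * |1/2 - s i| ≤ 1/2 := fun i => by
    simp only [s]
    split_ifs <;> simp only [sub_sub_cancel, sub_add_cancel_left, abs_neg] <;> linarith
  have hsum : 2 * ∑ i, ((1/2 - s i) / (1/2)) ^ 2 ≤ 8 * (a₁ + a₂) * b ^ 2 := by
    have hsplit : ∑ i, ((1/2 - s i) / (1/2)) ^ 2
        = ∑ i : Fin (m + k), if (i : ℕ) < m then 4 * δ₁ ^ 2 else 4 * δ₂ ^ 2 :=
      Finset.sum_congr rfl fun i _ => by simp only [s]; split_ifs <;> ring
    rw [hsplit, Fin.sum_ite_lt_add, nsmul_eq_mul, nsmul_eq_mul, hm, hk]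
    linear_combination 8 * floor_mul_rpow_two_thirds_mul_sq_le hr' ha₁.le b
      + 8 * floor_mul_rpow_two_thirds_mul_sq_le (hr'.trans_le hrn') ha₂.le b
  simp_rw [← apply_ite expMeasure]
  exact (integral_rnDeriv_pi_expMeasure_sq_le one_half_pos hs).trans (exp_le_exp.mpr hsum)
end
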